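/- Let τ be a nonempty face of Δ^d and a a new vertex. Then the elementary starring (τ,a)Δ^d is isomorphic to ∂τ ∗ Δ^{d−dim(τ)} (the join of the boundary of τ with a simplex of complementary dimension), and setting L := τ ∗ ∂Δ^{d−dim(τ)}, one has (τ,a)Δ^d + L = ∂Δ^{d+1} with ((τ,a)Δ^d) ∩ L = ∂L. In particular, every elementary starring of Δ^d is a subcomplex of ∂Δ^{d+1} whose complement-closure is a combinatorial ball. -/
import Mathlib


/-- A (finite) simplicial complex is represented as a finite set of faces
(finite sets of natural-number vertices). -/
abbrev Cx : Type := Finset (Finset ℕ)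

/-- `K` is a simplicial complex: closed under taking subsets of faces. -/
def IsComplex (K : Cx) : Prop := ∀ σ ∈ K, ∀ τ ⊆ σ, τ ∈ K

/-- Vertex set of a complex. -/
def verts (K : Cx) : Finset ℕ := K.sup id

/-- The full simplex on a vertex set `V` (all subsets). -/
def simplexOn (V : Finset ℕ) : Cx := V.powerset

/-- The boundary of the simplex on `V` (all proper subsets). -/
def boundaryOn (V : Finset ℕ) : Cx := V.powerset.erase V

/-- Alexander dual of `K` relative to a ground vertex set `V`. -/
def dual (K : Cx) (V : Finset ℕ) : Cx := V.powerset.filter (fun σ => V \ σ ∉ K)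

/-- Alexander dual of `K` relative to its own vertex set. -/
def dualSelf (K : Cx) : Cx := dual K (verts K)

/-- Iterated Alexander dual, each dual taken relative to the current vertex set. -/
def iterDual : ℕ → Cx → Cx
  | 0, K => K
  | m + 1, K => dualSelf (iterDual m K)

/-- Join of two complexes (on disjoint vertex sets). -/
def join (K L : Cx) : Cx := (K ×ˢ L).image fun p => p.1 ∪ p.2

/-- Link of a face `σ` in `K`. -/
def link (σ : Finset ℕ) (K : Cx) : Cx :=
  K.filter fun τ => τ ∩ σ = ∅ ∧ τ ∪ σ ∈ K

/-- Star of a face `σ` in `K`. -/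
def star (σ : Finset ℕ) (K : Cx) : Cx := K.filter fun τ => τ ∪ σ ∈ K

/-- Deletion of a vertex. -/
def del (v : ℕ) (K : Cx) : Cx := K.filter fun σ => v ∉ σ

/-- The facets (maximal = principal faces) of `K`. -/
def facets (K : Cx) : Cx := K.filter fun σ => ∀ τ ∈ K, σ ⊆ τ → σ = τ

/-- Number of principal simplices. -/
def mCount (K : Cx) : ℕ := (facets K).card

/-- `K.sup card`, i.e. `dim K + 1`. -/
def topCard (K : Cx) : ℕ := K.sup Finset.card

/-- Dimension of a complex, as an integer (so that `dim {∅} = -1`). -/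
def dimC (K : Cx) : ℤ := (topCard K : ℤ) - 1

/-- `L` is a top generated subcomplex of `K`. -/
def topGen (L K : Cx) : Prop := L ⊆ K ∧ facets L ⊆ facets K

/-- The boundary complex: generated by the ridges ((d-1)-faces) contained in
exactly one facet of top dimension. -/
def bd (K : Cx) : Cx :=
  (K.filter fun σ => σ.card + 1 = topCard K ∧
    (K.filter fun τ => τ.card = topCard K ∧ σ ⊆ τ).card = 1).biUnion Finset.powerset

/-- Simplicial isomorphism of complexes. -/
def Iso (K L : Cx) : Prop :=
  ∃ f : ℕ → ℕ, Set.InjOn f ↑(verts K) ∧ K.image (Finset.image f) = L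

/-- Elementary starring `(τ, a) K`: remove the faces containing `τ` and replace
`st(τ,K) = τ * lk(τ,K)` by `a * ∂τ * lk(τ,K)`. -/
def starringOp (τ : Finset ℕ) (a : ℕ) (K : Cx) : Cx :=
  K.filter (fun σ => ¬ τ ⊆ σ) ∪
    join (simplexOn {a}) (join (boundaryOn τ) (link τ K))

/-- One stellar subdivision step. -/
inductive SubdivStep : Cx → Cx → Prop where
  | mk (K : Cx) (τ : Finset ℕ) (a : ℕ) : τ ∈ K → τ ≠ ∅ → a ∉ verts K →
      SubdivStep K (starringOp τ a K)

/-- `Subdiv K K'` : `K'` is obtained from `K` by stellar subdivisions. -/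
def Subdiv : Cx → Cx → Prop := Relation.ReflTransGen SubdivStep

/-- Stellar equivalence (by Alexander's theorem, this is PL-isomorphism):
the equivalence relation generated by stellar subdivisions and simplicial
isomorphisms. -/
def StellarEquiv : Cx → Cx → Prop :=
  Relation.EqvGen (fun K L => SubdivStep K L ∨ Iso K L)

/-- A combinatorial `d`-ball: a complex PL-isomorphic to the `d`-simplex. -/
def CombBall (d : ℕ) (B : Cx) : Prop :=
  StellarEquiv B (simplexOn (Finset.range (d + 1)))

/-- A combinatorial `d`-sphere: a complex PL-isomorphic to `∂Δ^{d+1}`. -/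
def CombSphere (d : ℕ) (S : Cx) : Prop :=
  StellarEquiv S (boundaryOn (Finset.range (d + 2)))

/-- An elementary collapse step through a free face. -/
def CollapseStep (K L : Cx) : Prop :=
  ∃ σ τ : Finset ℕ, σ ∈ K ∧ τ ∈ K ∧ σ ⊆ τ ∧ σ.card + 1 = τ.card ∧
    (∀ ρ ∈ K, σ ⊆ ρ → ρ = σ ∨ ρ = τ) ∧ L = K \ {σ, τ}

/-- Simplicial collapse. -/
def CollapsesTo : Cx → Cx → Prop := Relation.ReflTransGen CollapseStep

/-- A complex is collapsible if it has a (stellar) subdivision which collapses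
to a single vertex. -/
def Collapsible (K : Cx) : Prop :=
  ∃ K', Subdiv K K' ∧ ∃ v : ℕ, CollapsesTo K' ({∅, {v}} : Cx)

mutual
/-- Non-homogeneous manifold of dimension `d` (inductive definition via links:
every vertex link is an NH-ball or an NH-sphere of smaller dimension; the
`(-1)`-dimensional NH-sphere is the complex `{∅}`). -/
def NHManifold : ℕ → Cx → Prop
  | 0 => fun K => IsComplex K ∧ K.Nonempty ∧ topCard K = 1
  | (d + 1) => fun K => IsComplex K ∧ topCard K = d + 2 ∧
      ∀ v ∈ verts K,
        link {v} K = ({∅} : Cx) ∨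
        (∃ k, ∃ _ : k ≤ d, NHBall k (link {v} K)) ∨
        (∃ k, ∃ _ : k ≤ d, ∃ j, ∃ _ : j ≤ k, NHSphereH k j (link {v} K))
  termination_by d => 3 * d
  decreasing_by all_goals omega

/-- Non-homogeneous ball of dimension `d`: a collapsible NH-manifold. -/
def NHBall : ℕ → Cx → Prop
  | 0 => fun K => ∃ v : ℕ, K = ({∅, {v}} : Cx)
  | (d + 1) => fun K => NHManifold (d + 1) K ∧ Collapsible K
  termination_by d => 3 * d + 1
  decreasing_by all_goals omega

/-- Non-homogeneous sphere of dimension `d` and homotopy dimension `k`: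
an NH-manifold `S` admitting a decomposition `S = B + L` with `B` a top
generated NH-ball of dimension `d`, `L` a top generated combinatorial
`k`-ball and `B ∩ L = ∂L`. -/
def NHSphereH : ℕ → ℕ → Cx → Prop
  | d, k => fun S => NHManifold d S ∧ ∃ B L : Cx,
      NHBall d B ∧ topGen B S ∧ CombBall k L ∧ topGen L S ∧
      B ∪ L = S ∧ B ∩ L = bd L
  termination_by d k => 3 * d + 2
  decreasing_by all_goals omega
end

/-- `S = B + L` is a decomposition of the `d`-dimensional NH-sphere `S` of
homotopy dimension `k`. -/
def SphereDecomp (d k : ℕ) (S B L : Cx) : Prop :=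
  NHManifold d S ∧ NHBall d B ∧ topGen B S ∧ CombBall k L ∧ topGen L S ∧
    B ∪ L = S ∧ B ∩ L = bd L

/-- A minimal NH-sphere of dimension `d`: an NH-sphere whose number of maximal
faces equals its homotopy dimension plus `2`. -/
def MinNHSphereD (d : ℕ) (S : Cx) : Prop :=
  ∃ k : ℕ, NHSphereH d k S ∧ mCount S = k + 2

/-- A minimal NH-sphere (of any dimension, including the `(-1)`-sphere `{∅}`). -/
def MinNHSphere (S : Cx) : Prop :=
  S = ({∅} : Cx) ∨ ∃ d : ℕ, MinNHSphereD d S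

/-- A minimal NH-ball of dimension `d`: an NH-ball `B` taking part in a
decomposition `S = B + L` of a minimal NH-sphere. -/
def MinNHBall (d : ℕ) (B : Cx) : Prop :=
  ∃ (k : ℕ) (S L : Cx), SphereDecomp d k S B L ∧ mCount S = k + 2


section Aux

open Finset

lemma mem_simplexOn {V σ : Finset ℕ} : σ ∈ simplexOn V ↔ σ ⊆ V := Finset.mem_powerset

lemma mem_boundaryOn {V σ : Finset ℕ} : σ ∈ boundaryOn V ↔ σ ⊆ V ∧ σ ≠ V := by
  simp [boundaryOn, Finset.mem_erase, and_comm]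

lemma mem_join {K L : Cx} {σ : Finset ℕ} :
    σ ∈ join K L ↔ ∃ s ∈ K, ∃ t ∈ L, σ = s ∪ t := by
  simp only [join, Finset.mem_image, Finset.mem_product, Prod.exists]
  constructor
  · rintro ⟨s, t, ⟨hs, ht⟩, rfl⟩; exact ⟨s, hs, t, ht, rfl⟩
  · rintro ⟨s, hs, t, ht, rfl⟩; exact ⟨s, t, ⟨hs, ht⟩, rfl⟩

lemma join_comm (K L : Cx) : join K L = join L K := by
  ext σ
  simp only [mem_join]
  constructor
  · rintro ⟨s, hs, t, ht, rfl⟩; exact ⟨t, ht, s, hs, Finset.union_comm s t⟩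
  · rintro ⟨t, ht, s, hs, rfl⟩; exact ⟨s, hs, t, ht, Finset.union_comm t s⟩

lemma mem_join_bs {τ W σ : Finset ℕ} (h : Disjoint τ W) :
    σ ∈ join (boundaryOn τ) (simplexOn W) ↔ σ ⊆ τ ∪ W ∧ ¬ τ ⊆ σ := by
  rw [mem_join]
  constructor
  · rintro ⟨s, hs, t, ht, rfl⟩
    rw [mem_boundaryOn] at hs; rw [mem_simplexOn] at ht
    refine ⟨Finset.union_subset_union hs.1 ht, fun hsub => hs.2 ?_⟩
    apply (Finset.Subset.antisymm _ hs.1).symm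
    intro x hx
    rcases Finset.mem_union.1 (hsub hx) with h1 | h1
    · exact h1
    · exact absurd hx (Finset.disjoint_left.1 h.symm (ht h1))
  · rintro ⟨hsub, hns⟩
    refine ⟨σ ∩ τ, ?_, σ \ τ, ?_, ?_⟩
    · rw [mem_boundaryOn]
      refine ⟨Finset.inter_subset_right, fun hEq => hns ?_⟩
      rw [← hEq]; exact Finset.inter_subset_left
    · rw [mem_simplexOn]
      intro x hx
      rcases Finset.mem_union.1 (hsub (Finset.mem_sdiff.1 hx).1) with h1 | h1
      · exact absurd h1 (Finset.mem_sdiff.1 hx).2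
      · exact h1
    · rw [Finset.union_comm, Finset.sdiff_union_inter σ τ]

lemma mem_join_sb {τ W σ : Finset ℕ} (h : Disjoint τ W) :
    σ ∈ join (simplexOn τ) (boundaryOn W) ↔ σ ⊆ τ ∪ W ∧ ¬ W ⊆ σ := by
  rw [join_comm, mem_join_bs h.symm, Finset.union_comm]

lemma verts_simplexOn (V : Finset ℕ) : verts (simplexOn V) = V := by
  apply Finset.Subset.antisymm
  · exact Finset.sup_le fun σ hσ => mem_simplexOn.1 hσ
  · exact Finset.le_sup (f := id) (Finset.mem_powerset_self V)

lemma link_simplexOn {τ V : Finset ℕ} (hτ : τ ⊆ V) :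
    link τ (simplexOn V) = simplexOn (V \ τ) := by
  ext σ
  simp only [link, Finset.mem_filter, mem_simplexOn, Finset.subset_sdiff]
  constructor
  · rintro ⟨h1, h2, _⟩
    exact ⟨h1, Finset.disjoint_left.2 fun x hx hx' =>
      Finset.notMem_empty x (h2 ▸ Finset.mem_inter.2 ⟨hx, hx'⟩)⟩
  · rintro ⟨h1, h2⟩
    refine ⟨h1, ?_, Finset.union_subset h1 hτ⟩
    rw [← Finset.disjoint_iff_inter_eq_empty]; exact h2

lemma starring_simplex {τ V : Finset ℕ} {a : ℕ} (hτ : τ ⊆ V) (hne : τ ≠ ∅) (ha : a ∉ V) :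
    starringOp τ a (simplexOn V) = join (boundaryOn τ) (simplexOn (insert a (V \ τ))) := by
  have haτ : a ∉ τ := fun h => ha (hτ h)
  have hdτ : Disjoint τ (V \ τ) := Finset.disjoint_sdiff
  have hd : Disjoint τ (insert a (V \ τ)) := by
    rw [Finset.disjoint_insert_right]
    exact ⟨haτ, hdτ⟩
  have hVτ : τ ∪ (V \ τ) = V := Finset.union_sdiff_of_subset hτ
  ext σ
  rw [starringOp, Finset.mem_union, link_simplexOn hτ, mem_join_bs hd,
    Finset.union_comm τ, Finset.insert_union, Finset.union_comm _ τ, hVτ]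
  constructor
  · rintro (h | h)
    · rw [Finset.mem_filter, mem_simplexOn] at h
      exact ⟨h.1.trans (Finset.subset_insert a V), h.2⟩
    · rw [mem_join] at h
      obtain ⟨s, hs, t, ht, rfl⟩ := h
      rw [mem_simplexOn, Finset.subset_singleton_iff] at hs
      rw [mem_join_bs hdτ, hVτ] at ht
      constructor
      · rcases hs with rfl | rfl
        · simp only [Finset.empty_union]
          exact ht.1.trans (Finset.subset_insert a V)
        · exact Finset.union_subset (by simp) (ht.1.trans (Finset.subset_insert a V))
      · intro hsub
        apply ht.2
        intro x hx
        rcases Finset.mem_union.1 (hsub hx) with h1 | h1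
        · rcases hs with rfl | rfl
          · exact absurd h1 (Finset.notMem_empty x)
          · rw [Finset.mem_singleton] at h1; subst h1; exact absurd hx haτ
        · exact h1
  · rintro ⟨hsub, hns⟩
    right
    rw [mem_join]
    refine ⟨σ ∩ {a}, ?_, σ.erase a, ?_, ?_⟩
    · rw [mem_simplexOn]; exact Finset.inter_subset_right
    · rw [mem_join_bs hdτ, hVτ]
      constructor
      · intro x hx
        rcases Finset.mem_insert.1 (hsub (Finset.mem_erase.1 hx).2) with h1 | h1
        · exact absurd h1 (Finset.mem_erase.1 hx).1
        · exact h1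
      · exact fun h => hns (h.trans (Finset.erase_subset a σ))
    · ext x
      simp only [Finset.mem_union, Finset.mem_inter, Finset.mem_singleton, Finset.mem_erase]
      by_cases hx : x = a <;> simp [hx] <;> tauto


lemma iso_simplexOn {A B : Finset ℕ} (h : A.card = B.card) : Iso (simplexOn A) (simplexOn B) := by
  classical
  set e := Finset.equivOfCardEq h with he
  set f : ℕ → ℕ := fun n => if hn : n ∈ A then (e ⟨n, hn⟩ : ℕ) else 0 with hf
  set g : ℕ → ℕ := fun n => if hn : n ∈ B then (e.symm ⟨n, hn⟩ : ℕ) else 0 with hg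
  have hfg : ∀ b ∈ B, f (g b) = b := by
    intro b hb
    have hgA : g b ∈ A := by
      rw [hg]; simp only [dif_pos hb]; exact (e.symm ⟨b, hb⟩).2
    rw [hf]; simp only [dif_pos hgA]
    have heq : (⟨g b, hgA⟩ : {x // x ∈ A}) = e.symm ⟨b, hb⟩ := by
      apply Subtype.ext
      show g b = _
      rw [hg]; simp only [dif_pos hb]
    rw [heq, Equiv.apply_symm_apply]
  have hfB : ∀ x ∈ A, f x ∈ B := by
    intro x hx; rw [hf]; simp only [dif_pos hx]; exact (e ⟨x, hx⟩).2
  refine ⟨f, ?_, ?_⟩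
  · rw [verts_simplexOn]
    intro x hx y hy hxy
    rw [Finset.mem_coe] at hx hy
    rw [hf] at hxy
    simp only [dif_pos hx, dif_pos hy] at hxy
    exact Subtype.ext_iff.1 (e.injective (Subtype.ext hxy))
  · ext ρ
    simp only [Finset.mem_image]
    constructor
    · rintro ⟨σ, hσ, rfl⟩
      rw [mem_simplexOn] at hσ
      rw [mem_simplexOn]
      intro y hy
      obtain ⟨x, hx, rfl⟩ := Finset.mem_image.1 hy
      exact hfB x (hσ hx)
    · intro hρ
      rw [mem_simplexOn] at hρ
      refine ⟨ρ.image g, ?_, ?_⟩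
      · rw [mem_simplexOn]
        intro y hy
        obtain ⟨b, hb, rfl⟩ := Finset.mem_image.1 hy
        have hbB := hρ hb
        rw [hg]; simp only [dif_pos hbB]; exact (e.symm ⟨b, hbB⟩).2
      · rw [Finset.image_image]
        have himg : ρ.image (f ∘ g) = ρ.image id :=
          Finset.image_congr (fun b hb => hfg b (hρ hb))
        rw [himg, Finset.image_id]

lemma combBall_join_sb {τ W : Finset ℕ} {d : ℕ} (hd : Disjoint τ W) (hτ : τ.Nonempty)
    (hW : W.Nonempty) (hcard : (τ ∪ W).card = d + 2) :
    CombBall d (join (simplexOn τ) (boundaryOn W)) := by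
  obtain ⟨t, ht⟩ := hτ
  set V₀ := W ∪ τ.erase t with hV₀
  have htW : t ∉ W := Finset.disjoint_left.1 hd ht
  have htV₀ : t ∉ V₀ := by
    rw [hV₀, Finset.mem_union]
    rintro (h | h)
    · exact htW h
    · exact (Finset.mem_erase.1 h).1 rfl
  have hWV₀ : W ⊆ V₀ := Finset.subset_union_left
  have hWne : W ≠ ∅ := Finset.nonempty_iff_ne_empty.1 hW
  have hdiff : V₀ \ W = τ.erase t := by
    rw [hV₀, Finset.union_sdiff_distrib, Finset.sdiff_self, Finset.empty_union,
      Finset.sdiff_eq_self_iff_disjoint]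
    exact Finset.disjoint_of_subset_left (Finset.erase_subset t τ) hd
  have hins : insert t (V₀ \ W) = τ := by rw [hdiff, Finset.insert_erase ht]
  have hstar : starringOp W t (simplexOn V₀) = join (simplexOn τ) (boundaryOn W) := by
    rw [starring_simplex hWV₀ hWne htV₀, hins, join_comm]
  have hstep : SubdivStep (simplexOn V₀) (join (simplexOn τ) (boundaryOn W)) := by
    rw [← hstar]
    exact SubdivStep.mk _ W t (mem_simplexOn.2 hWV₀) hWne
      (by rw [verts_simplexOn]; exact htV₀)
  have hcV₀ : V₀.card = d + 1 := by
    have h1 : (τ ∪ W).card = τ.card + W.card := Finset.card_union_of_disjoint hd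
    have h2 : V₀.card = W.card + (τ.card - 1) := by
      rw [hV₀, Finset.card_union_of_disjoint
        (Finset.disjoint_of_subset_right (Finset.erase_subset t τ) hd.symm),
        Finset.card_erase_of_mem ht]
    have h3 : 1 ≤ τ.card := Finset.card_pos.2 ⟨t, ht⟩
    omega
  have hiso : Iso (simplexOn V₀) (simplexOn (Finset.range (d + 1))) :=
    iso_simplexOn (by rw [hcV₀, Finset.card_range])
  exact Relation.EqvGen.trans _ _ _
    (Relation.EqvGen.symm _ _ (Relation.EqvGen.rel _ _ (Or.inl hstep)))
    (Relation.EqvGen.rel _ _ (Or.inr hiso))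


lemma topCard_join_sb {τ W : Finset ℕ} {d : ℕ} (hd : Disjoint τ W) (hW : W.Nonempty)
    (hcard : (τ ∪ W).card = d + 2) :
    topCard (join (simplexOn τ) (boundaryOn W)) = d + 1 := by
  apply le_antisymm
  · apply Finset.sup_le
    intro σ hσ
    rw [mem_join_sb hd] at hσ
    have hss : σ ⊂ τ ∪ W :=
      ⟨hσ.1, fun hc => hσ.2 (Finset.subset_union_right.trans hc)⟩
    have := Finset.card_lt_card hss
    omega
  · obtain ⟨w, hw⟩ := hW
    have hmem : (τ ∪ W).erase w ∈ join (simplexOn τ) (boundaryOn W) := by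
      rw [mem_join_sb hd]
      exact ⟨Finset.erase_subset _ _, fun hc => (Finset.mem_erase.1 (hc hw)).1 rfl⟩
    have hc : ((τ ∪ W).erase w).card = d + 1 := by
      rw [Finset.card_erase_of_mem (Finset.mem_union_right _ hw)]; omega
    calc d + 1 = ((τ ∪ W).erase w).card := hc.symm
      _ ≤ _ := Finset.le_sup (f := Finset.card) hmem

lemma facets_through_ridge {τ W σ : Finset ℕ} {d : ℕ} (hd : Disjoint τ W)
    (hcard : (τ ∪ W).card = d + 2) (hσX : σ ⊆ τ ∪ W) (hσc : σ.card = d) :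
    (join (simplexOn τ) (boundaryOn W)).filter (fun ρ' => ρ'.card = d + 1 ∧ σ ⊆ ρ')
      = (W \ σ).image (fun w => (τ ∪ W).erase w) := by
  ext ρ'
  rw [Finset.mem_filter, mem_join_sb hd, Finset.mem_image]
  constructor
  · rintro ⟨⟨hρX, hρW⟩, hρc, hσρ⟩
    obtain ⟨w, hwW, hwρ⟩ := Finset.not_subset.1 hρW
    refine ⟨w, Finset.mem_sdiff.2 ⟨hwW, fun h => hwρ (hσρ h)⟩, ?_⟩
    exact (Finset.eq_of_subset_of_card_le (Finset.subset_erase.2 ⟨hρX, hwρ⟩) (by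
      rw [Finset.card_erase_of_mem (Finset.mem_union_right _ hwW)]; omega)).symm
  · rintro ⟨w, hw, rfl⟩
    rw [Finset.mem_sdiff] at hw
    refine ⟨⟨Finset.erase_subset _ _, fun hc => (Finset.mem_erase.1 (hc hw.1)).1 rfl⟩, ?_, ?_⟩
    · rw [Finset.card_erase_of_mem (Finset.mem_union_right _ hw.1)]; omega
    · exact Finset.subset_erase.2 ⟨hσX, hw.2⟩

lemma bd_join_sb {τ W : Finset ℕ} {d : ℕ} (hd : Disjoint τ W) (hτ : τ.Nonempty)
    (hW : W.Nonempty) (hcard : (τ ∪ W).card = d + 2) (ρ : Finset ℕ) :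
    ρ ∈ bd (join (simplexOn τ) (boundaryOn W)) ↔
      ρ ⊆ τ ∪ W ∧ ¬ τ ⊆ ρ ∧ ¬ W ⊆ ρ := by
  have htop := topCard_join_sb hd hW hcard
  have hkey : ∀ σ : Finset ℕ,
      (σ ∈ join (simplexOn τ) (boundaryOn W) ∧ σ.card + 1 = d + 1 ∧
        ((join (simplexOn τ) (boundaryOn W)).filter
          (fun ρ' => ρ'.card = d + 1 ∧ σ ⊆ ρ')).card = 1) ↔
      (σ ⊆ τ ∪ W ∧ ¬ τ ⊆ σ ∧ ¬ W ⊆ σ ∧ σ.card = d) := by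
    intro σ
    constructor
    · rintro ⟨hσL, hσc, hcount⟩
      rw [mem_join_sb hd] at hσL
      have hσc' : σ.card = d := by omega
      rw [facets_through_ridge hd hcard hσL.1 hσc'] at hcount
      have hinj : Set.InjOn (fun w => (τ ∪ W).erase w) ↑(W \ σ) := by
        intro x hx y hy hxy
        by_contra hne
        have hxy' : (τ ∪ W).erase x = (τ ∪ W).erase y := hxy
        have hxX' : x ∈ τ ∪ W :=
          Finset.mem_union_right _ (Finset.mem_sdiff.1 (Finset.mem_coe.1 hx)).1
        have hmem : x ∈ (τ ∪ W).erase y := Finset.mem_erase.2 ⟨hne, hxX'⟩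
        rw [← hxy'] at hmem
        exact (Finset.mem_erase.1 hmem).1 rfl
      rw [Finset.card_image_of_injOn hinj] at hcount
      -- card (X \ σ) = 2, split as (τ\σ) ∪ (W\σ)
      have hXσ : ((τ ∪ W) \ σ).card = 2 := by
        rw [Finset.card_sdiff_of_subset hσL.1]; omega
      have hsplit : (τ ∪ W) \ σ = (τ \ σ) ∪ (W \ σ) := Finset.union_sdiff_distrib ..
      have hdisj2 : Disjoint (τ \ σ) (W \ σ) :=
        Finset.disjoint_of_subset_left Finset.sdiff_subset
          (Finset.disjoint_of_subset_right Finset.sdiff_subset hd)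
      have hadd : (τ \ σ).card + (W \ σ).card = 2 := by
        rw [← Finset.card_union_of_disjoint hdisj2, ← hsplit]; exact hXσ
      have hτσ : (τ \ σ).card ≥ 1 := by omega
      have : (τ \ σ).Nonempty := Finset.card_pos.1 hτσ
      refine ⟨hσL.1, ?_, hσL.2, hσc'⟩
      rw [← Finset.sdiff_nonempty]; exact this
    · rintro ⟨hσX, hτσ, hWσ, hσc⟩
      have hσL : σ ∈ join (simplexOn τ) (boundaryOn W) := (mem_join_sb hd).2 ⟨hσX, hWσ⟩
      refine ⟨hσL, by omega, ?_⟩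
      rw [facets_through_ridge hd hcard hσX hσc]
      have hinj : Set.InjOn (fun w => (τ ∪ W).erase w) ↑(W \ σ) := by
        intro x hx y hy hxy
        by_contra hne
        have hxy' : (τ ∪ W).erase x = (τ ∪ W).erase y := hxy
        have hxX' : x ∈ τ ∪ W :=
          Finset.mem_union_right _ (Finset.mem_sdiff.1 (Finset.mem_coe.1 hx)).1
        have hmem : x ∈ (τ ∪ W).erase y := Finset.mem_erase.2 ⟨hne, hxX'⟩
        rw [← hxy'] at hmem
        exact (Finset.mem_erase.1 hmem).1 rfl
      rw [Finset.card_image_of_injOn hinj]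
      have hXσ : ((τ ∪ W) \ σ).card = 2 := by
        rw [Finset.card_sdiff_of_subset hσX]; omega
      have hsplit : (τ ∪ W) \ σ = (τ \ σ) ∪ (W \ σ) := Finset.union_sdiff_distrib ..
      have hdisj2 : Disjoint (τ \ σ) (W \ σ) :=
        Finset.disjoint_of_subset_left Finset.sdiff_subset
          (Finset.disjoint_of_subset_right Finset.sdiff_subset hd)
      have hadd : (τ \ σ).card + (W \ σ).card = 2 := by
        rw [← Finset.card_union_of_disjoint hdisj2, ← hsplit]; exact hXσ
      have h1 : (τ \ σ).card ≥ 1 :=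
        Finset.card_pos.2 (Finset.sdiff_nonempty.2 hτσ)
      have h2 : (W \ σ).card ≥ 1 :=
        Finset.card_pos.2 (Finset.sdiff_nonempty.2 hWσ)
      omega
  rw [bd, Finset.mem_biUnion]
  constructor
  · rintro ⟨σ, hσ, hρσ⟩
    rw [Finset.mem_filter, htop] at hσ
    rw [Finset.mem_powerset] at hρσ
    obtain ⟨hσX, hτσ, hWσ, _⟩ := (hkey σ).1 ⟨hσ.1, hσ.2.1, hσ.2.2⟩
    exact ⟨hρσ.trans hσX, fun h => hτσ (h.trans hρσ), fun h => hWσ (h.trans hρσ)⟩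
  · rintro ⟨hρX, hτρ, hWρ⟩
    obtain ⟨x, hxτ, hxρ⟩ := Finset.not_subset.1 hτρ
    obtain ⟨w, hwW, hwρ⟩ := Finset.not_subset.1 hWρ
    have hxw : x ≠ w := fun h => Finset.disjoint_left.1 hd hxτ (h ▸ hwW)
    set σ := ((τ ∪ W).erase x).erase w with hσdef
    have hwX : w ∈ (τ ∪ W).erase x :=
      Finset.mem_erase.2 ⟨fun h => hxw h.symm, Finset.mem_union_right _ hwW⟩
    have hσX : σ ⊆ τ ∪ W := (Finset.erase_subset _ _).trans (Finset.erase_subset _ _)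
    have hσc : σ.card = d := by
      rw [hσdef, Finset.card_erase_of_mem hwX,
        Finset.card_erase_of_mem (Finset.mem_union_left _ hxτ)]
      omega
    have hτσ : ¬ τ ⊆ σ := fun h =>
      (Finset.mem_erase.1 (Finset.mem_of_mem_erase (h hxτ))).1 rfl
    have hWσ : ¬ W ⊆ σ := fun h => (Finset.mem_erase.1 (h hwW)).1 rfl
    refine ⟨σ, ?_, ?_⟩
    · rw [Finset.mem_filter, htop]
      obtain ⟨h1, h2, h3⟩ := (hkey σ).2 ⟨hσX, hτσ, hWσ, hσc⟩
      exact ⟨h1, h2, h3⟩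
    · rw [Finset.mem_powerset, hσdef]
      exact Finset.subset_erase.2 ⟨Finset.subset_erase.2 ⟨hρX, hxρ⟩, hwρ⟩

end Aux

/-- `(τ,a)Δ^d = ∂τ * Δ^{d - dim τ}`, and with
`L := τ * ∂Δ^{d - dim τ}` one has `(τ,a)Δ^d + L = ∂Δ^{d+1}` and
`((τ,a)Δ^d) ∩ L = ∂L`; moreover `L` is a combinatorial `d`-ball. -/
theorem stmt8 (d : ℕ) (τ : Finset ℕ) (a : ℕ)
    (hτ : τ ⊆ Finset.range (d + 1)) (hne : τ ≠ ∅) (ha : a ∉ Finset.range (d + 1)) :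
    starringOp τ a (simplexOn (Finset.range (d + 1))) =
        join (boundaryOn τ) (simplexOn (insert a (Finset.range (d + 1) \ τ))) ∧
      starringOp τ a (simplexOn (Finset.range (d + 1))) ∪
          join (simplexOn τ) (boundaryOn (insert a (Finset.range (d + 1) \ τ))) =
        boundaryOn (insert a (Finset.range (d + 1))) ∧
      starringOp τ a (simplexOn (Finset.range (d + 1))) ∩
          join (simplexOn τ) (boundaryOn (insert a (Finset.range (d + 1) \ τ))) =
        bd (join (simplexOn τ) (boundaryOn (insert a (Finset.range (d + 1) \ τ)))) ∧
      CombBall d (join (simplexOn τ) (boundaryOn (insert a (Finset.range (d + 1) \ τ)))) := by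
  set V := Finset.range (d + 1) with hV
  set W := insert a (V \ τ) with hW
  have haτ : a ∉ τ := fun h => ha (hτ h)
  have hd' : Disjoint τ W := by
    rw [hW, Finset.disjoint_insert_right]
    exact ⟨haτ, Finset.disjoint_sdiff⟩
  have hUW : τ ∪ W = insert a V := by
    rw [hW, Finset.union_insert, Finset.union_sdiff_of_subset hτ]
  have hcX : (τ ∪ W).card = d + 2 := by
    rw [hUW, Finset.card_insert_of_notMem ha, hV, Finset.card_range]
  have hτne : τ.Nonempty := Finset.nonempty_iff_ne_empty.2 hne
  have hWne : W.Nonempty := ⟨a, Finset.mem_insert_self _ _⟩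
  have part1 := starring_simplex hτ hne ha
  refine ⟨part1, ?_, ?_, combBall_join_sb hd' hτne hWne hcX⟩
  · ext σ
    rw [Finset.mem_union, part1, mem_join_bs hd', mem_join_sb hd', mem_boundaryOn, ← hUW]
    constructor
    · rintro (⟨h1, h2⟩ | ⟨h1, h2⟩)
      · exact ⟨h1, fun hEq => h2 (hEq ▸ Finset.subset_union_left)⟩
      · exact ⟨h1, fun hEq => h2 (hEq ▸ Finset.subset_union_right)⟩
    · rintro ⟨h1, h2⟩
      have hss : σ ⊂ τ ∪ W := ⟨h1, fun hc => h2 (Finset.Subset.antisymm h1 hc)⟩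
      obtain ⟨x, hx1, hx2⟩ := Finset.exists_of_ssubset hss
      rcases Finset.mem_union.1 hx1 with hx | hx
      · exact Or.inl ⟨h1, fun hc => hx2 (hc hx)⟩
      · exact Or.inr ⟨h1, fun hc => hx2 (hc hx)⟩
  · ext σ
    rw [Finset.mem_inter, part1, mem_join_bs hd', mem_join_sb hd',
      bd_join_sb hd' hτne hWne hcX σ]
    tauto
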